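/- Let n and r be positive integers with n ≥ 2r. Then the base size of the symmetric group S_n acting on the set of r-element subsets of [n] equals the least positive integer l for which there exists an (l,n,r)-hypergraph, i.e., a set E of n distinct subsets of [l] (the empty subset allowed) such that every x ∈ [l] lies in at most r members of E and the map x ↦ {e ∈ E : x ∈ e} is injective on [l]. -/

import Mathlib

/-- `𝓑` is a base for the symmetric group `S_n` acting on `r`-element subsets of `[n]`. -/
def IsBaseSym (n r : ℕ) (𝓑 : Finset (Finset (Fin n))) : Prop :=
  (∀ B ∈ 𝓑, B.card = r) ∧
    ∀ σ : Equiv.Perm (Fin n), (∀ B ∈ 𝓑, B.image σ = B) → σ = 1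

/-- The base size of `S_n` acting on `r`-element subsets of `[n]`. -/
noncomputable def baseSizeSym (n r : ℕ) : ℕ :=
  sInf {l : ℕ | ∃ 𝓑 : Finset (Finset (Fin n)), IsBaseSym n r 𝓑 ∧ 𝓑.card = l}


section Aux
open Finset

def hdeg {n l : ℕ} (e : Fin n → Finset (Fin l)) (i : Fin l) : ℕ :=
  (univ.filter (fun x => i ∈ e x)).card

lemma mem_iff_of_image_eq {α : Type*} [DecidableEq α] (σ : Equiv.Perm α) {B : Finset α}
    (h : B.image σ = B) (x : α) : x ∈ B ↔ σ x ∈ B := by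
  constructor
  · intro hx; rw [← h]; exact mem_image_of_mem σ hx
  · intro hx; rw [← h] at hx
    obtain ⟨z, hz, hzx⟩ := mem_image.mp hx
    rwa [← σ.injective hzx]

lemma image_swap_eq {α : Type*} [DecidableEq α] {x y : α} {B : Finset α}
    (h : (x ∈ B ↔ y ∈ B)) : B.image (Equiv.swap x y) = B := by
  ext z
  simp only [mem_image]
  constructor
  · rintro ⟨w, hw, rfl⟩
    rcases eq_or_ne w x with rfl | hwx
    · rw [Equiv.swap_apply_left]; exact h.mp hw
    rcases eq_or_ne w y with rfl | hwy
    · rw [Equiv.swap_apply_right]; exact h.mpr hw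
    · rwa [Equiv.swap_apply_of_ne_of_ne hwx hwy]
  · intro hz
    rcases eq_or_ne z x with rfl | hzx
    · exact ⟨y, h.mp hz, Equiv.swap_apply_right _ _⟩
    rcases eq_or_ne z y with rfl | hzy
    · exact ⟨x, h.mpr hz, Equiv.swap_apply_left _ _⟩
    · exact ⟨z, hz, Equiv.swap_apply_of_ne_of_ne hzx hzy⟩

lemma filter_card_eq_hdeg {n l : ℕ} (e : Fin n → Finset (Fin l))
    (hinj : Function.Injective e) (i : Fin l) :
    (((univ.image e)).filter (fun s => i ∈ s)).card = hdeg e i := by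
  rw [Finset.filter_image, card_image_of_injective _ hinj]
  rfl

lemma pad {n l r : ℕ} (hn : 2 * r ≤ n) :
    ∀ (k : ℕ) (e : Fin n → Finset (Fin l)), (∑ i, (r - hdeg e i)) = k →
      Function.Injective e → (∀ i, hdeg e i ≤ r) →
      ∃ e' : Fin n → Finset (Fin l), Function.Injective e' ∧ ∀ i, hdeg e' i = r := by
  intro k
  induction k with
  | zero =>
    intro e hsum hinj hle
    refine ⟨e, hinj, fun i => ?_⟩
    have := Finset.sum_eq_zero_iff.mp hsum i (mem_univ i)
    have := hle i
    omega
  | succ k ih =>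
    intro e hsum hinj hle
    -- find a deficient vertex
    have hex : ∃ i : Fin l, hdeg e i < r := by
      by_contra hc
      push_neg at hc
      have : ∑ i : Fin l, (r - hdeg e i) = 0 :=
        Finset.sum_eq_zero (fun i _ => by have := hc i; omega)
      omega
    obtain ⟨i, hi⟩ := hex
    set d := hdeg e i with hd
    -- the set of x not containing i
    set A : Finset (Fin n) := univ.filter (fun x => i ∉ e x) with hA
    have hAcard : A.card = n - d := by
      have : A = (univ.filter (fun x => i ∈ e x))ᶜ := by
        ext x; simp [hA]
      rw [this, card_compl]
      simp [hd, hdeg]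
    set Bad : Finset (Fin n) := A.filter (fun x => ∃ y, e y = insert i (e x)) with hBad
    have hBadcard : Bad.card ≤ d := by
      classical
      have : Bad.card ≤ (univ.filter (fun y => i ∈ e y)).card := by
        apply Finset.card_le_card_of_injOn
          (fun x => if h : ∃ y, e y = insert i (e x) then h.choose else x)
        · intro x hx
          simp only [hBad, coe_filter, mem_filter, Set.mem_setOf_eq] at hx
          obtain ⟨hxA, hex⟩ := hx
          simp only [dif_pos hex, coe_filter, mem_filter, Set.mem_setOf_eq, mem_univ, true_and]
          rw [hex.choose_spec]
          exact mem_insert_self _ _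
        · intro x hx x' hx' hxx'
          simp only [hBad, coe_filter, Set.mem_setOf_eq] at hx hx'
          obtain ⟨hxA, hexx⟩ := hx
          obtain ⟨hx'A, hexx'⟩ := hx'
          simp only [dif_pos hexx, dif_pos hexx'] at hxx'
          have h1 := hexx.choose_spec
          have h2 := hexx'.choose_spec
          rw [hxx', h2] at h1
          -- insert i (e x') = insert i (e x), i ∉ both
          simp only [hA, mem_filter] at hxA hx'A
          have hxni : i ∉ e x := hxA.2
          have hx'ni : i ∉ e x' := hx'A.2
          have : e x = e x' := by
            ext j
            rcases eq_or_ne j i with rfl | hj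
            · simp [hxni, hx'ni]
            · have := Finset.ext_iff.mp h1 j
              simp only [mem_insert, hj, false_or] at this
              exact this.symm
          exact hinj this
      simpa [hd, hdeg] using this
    have hgood : (A \ Bad).Nonempty := by
      rw [← Finset.card_pos]
      have h1 : Bad ⊆ A := filter_subset _ _
      have h2 : (A \ Bad).card = A.card - Bad.card := card_sdiff_of_subset h1
      omega
    obtain ⟨x, hx⟩ := hgood
    rw [mem_sdiff] at hx
    obtain ⟨hxA, hxBad⟩ := hx
    have hxni : i ∉ e x := (mem_filter.mp hxA).2
    have hxno : ¬∃ y, e y = insert i (e x) := by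
      intro hc; exact hxBad (mem_filter.mpr ⟨hxA, hc⟩)
    set e' : Fin n → Finset (Fin l) := Function.update e x (insert i (e x)) with he'
    have he'x : e' x = insert i (e x) := Function.update_self _ _ _
    have he'ne : ∀ y ≠ x, e' y = e y := fun y hy => Function.update_of_ne hy _ _
    have hinj' : Function.Injective e' := by
      intro a b hab
      rcases eq_or_ne a x with rfl | ha
      · rcases eq_or_ne b a with rfl | hb
        · rfl
        · rw [he'x, he'ne b hb] at hab
          exact absurd ⟨b, hab.symm⟩ hxno
      · rcases eq_or_ne b x with rfl | hb
        · rw [he'x, he'ne a ha] at hab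
          exact absurd ⟨a, hab⟩ hxno
        · rw [he'ne a ha, he'ne b hb] at hab
          exact hinj hab
    have hdegne : ∀ j ≠ i, hdeg e' j = hdeg e j := by
      intro j hj
      unfold hdeg
      congr 1
      apply filter_congr
      intro y _
      rcases eq_or_ne y x with rfl | hy
      · rw [he'x]
        simp [mem_insert, hj]
      · rw [he'ne y hy]
    have hdegi : hdeg e' i = d + 1 := by
      unfold hdeg
      have : (univ.filter (fun y => i ∈ e' y)) = insert x (univ.filter (fun y => i ∈ e y)) := by
        ext y
        rcases eq_or_ne y x with rfl | hy
        · simp [he'x]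
        · simp only [mem_filter, mem_univ, true_and, mem_insert, hy, false_or]
          rw [he'ne y hy]
      rw [this, card_insert_of_notMem (by simp [hxni]), hd, hdeg]
    have hle' : ∀ j, hdeg e' j ≤ r := by
      intro j
      rcases eq_or_ne j i with rfl | hj
      · omega
      · rw [hdegne j hj]; exact hle j
    apply ih e' _ hinj' hle'
    have hs1 : (r - hdeg e' i) + ∑ j ∈ univ.erase i, (r - hdeg e' j) = ∑ j, (r - hdeg e' j) :=
      Finset.add_sum_erase univ (fun j => r - hdeg e' j) (mem_univ i)
    have hs2 : (r - hdeg e i) + ∑ j ∈ univ.erase i, (r - hdeg e j) = ∑ j, (r - hdeg e j) :=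
      Finset.add_sum_erase univ (fun j => r - hdeg e j) (mem_univ i)
    have hs3 : ∑ j ∈ univ.erase i, (r - hdeg e' j) = ∑ j ∈ univ.erase i, (r - hdeg e j) := by
      apply Finset.sum_congr rfl
      intro j hj
      rw [hdegne j (Finset.ne_of_mem_erase hj)]
    omega

/-- From an injective edge map with all degrees exactly `r`, build a base of card `≤ l`. -/
lemma base_of_edges {n l r : ℕ} (e : Fin n → Finset (Fin l))
    (hinj : Function.Injective e) (hdegr : ∀ i, hdeg e i = r) :
    ∃ 𝓑 : Finset (Finset (Fin n)), IsBaseSym n r 𝓑 ∧ 𝓑.card ≤ l := by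
  set B : Fin l → Finset (Fin n) := fun i => univ.filter (fun x => i ∈ e x) with hB
  refine ⟨univ.image B, ⟨?_, ?_⟩, ?_⟩
  · intro b hb
    obtain ⟨i, _, rfl⟩ := mem_image.mp hb
    exact hdegr i
  · intro σ hσ
    apply Equiv.ext
    intro x
    simp only [Equiv.Perm.coe_one, id_eq]
    have hkey : e (σ x) = e x := by
      ext i
      have h1 := mem_iff_of_image_eq σ (hσ (B i) (mem_image_of_mem B (mem_univ i))) x
      simp only [hB, mem_filter, mem_univ, true_and] at h1
      exact (h1.symm)
    exact hinj hkey
  · exact (card_image_le).trans (by simp)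

/-- every base gives rise to a hypergraph on `l = 𝓑.card` vertices. -/
lemma hypergraph_of_base {n r l : ℕ} (hn2 : 2 ≤ n) (𝓑 : Finset (Finset (Fin n)))
    (hbase : IsBaseSym n r 𝓑) (hcard : 𝓑.card = l) :
    0 < l ∧ ∃ E : Finset (Finset (Fin l)), E.card = n ∧
      (∀ x : Fin l, (E.filter (fun e => x ∈ e)).card ≤ r) ∧
      Function.Injective (fun x : Fin l => E.filter (fun e => x ∈ e)) := by
  have hl : 0 < l := by
    rcases Nat.eq_zero_or_pos l with rfl | h
    · exfalso
      have h0 : 𝓑 = ∅ := card_eq_zero.mp hcard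
      have x0 : Fin n := ⟨0, by omega⟩
      have x1 : Fin n := ⟨1, by omega⟩
      have := hbase.2 (Equiv.swap (⟨0, by omega⟩ : Fin n) ⟨1, by omega⟩)
        (by simp [h0])
      have := Equiv.swap_eq_one_iff.mp this
      simp [Fin.ext_iff] at this
    · exact h
  refine ⟨hl, ?_⟩
  set ι := (Finset.equivFinOfCardEq hcard).symm with hι
  set B : Fin l → Finset (Fin n) := fun i => (ι i : Finset (Fin n)) with hB
  have hBmem : ∀ i, B i ∈ 𝓑 := fun i => (ι i).2
  have hBinj : Function.Injective B := by
    intro i j h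
    exact ι.injective (Subtype.ext h)
  have hBall : ∀ b ∈ 𝓑, ∃ i, B i = b := by
    intro b hb
    exact ⟨ι.symm ⟨b, hb⟩, by simp [hB]⟩
  set e : Fin n → Finset (Fin l) := fun x => univ.filter (fun i => x ∈ B i) with he
  have hinj : Function.Injective e := by
    intro x y hxy
    by_contra hne
    have hmem : ∀ i, x ∈ B i ↔ y ∈ B i := by
      intro i
      have := Finset.ext_iff.mp hxy i
      simpa [he] using this
    have hfix : ∀ b ∈ 𝓑, b.image (Equiv.swap x y) = b := by
      intro b hb
      obtain ⟨i, rfl⟩ := hBall b hb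
      exact image_swap_eq (hmem i)
    exact hne (Equiv.swap_eq_one_iff.mp (hbase.2 _ hfix))
  refine ⟨univ.image e, by rw [card_image_of_injective _ hinj, card_univ, Fintype.card_fin], ?_, ?_⟩
  · intro i
    rw [filter_card_eq_hdeg e hinj i]
    have : univ.filter (fun x => i ∈ e x) = B i := by
      ext x
      simp [he]
    rw [hdeg, this]
    exact le_of_eq (hbase.1 _ (hBmem i))
  · intro i j hij
    simp only [Finset.filter_image] at hij
    have h2 := Finset.image_injective hinj hij
    have : B i = B j := by
      ext x
      have := Finset.ext_iff.mp h2 x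
      simpa [he] using this
    exact hBinj this

/-- the set of r-subsets forms a base (when `r + 1 ≤ n`, `0 < r`). -/
lemma exists_base (n r : ℕ) (hr : 0 < r) (hrn : r + 1 ≤ n) :
    ∃ 𝓑 : Finset (Finset (Fin n)), IsBaseSym n r 𝓑 := by
  refine ⟨Finset.powersetCard r univ, fun B hB => (Finset.mem_powersetCard_univ).mp hB, ?_⟩
  intro σ h
  apply Equiv.ext
  intro x
  by_contra hne
  have hsx : σ x ≠ x := hne
  set s : Finset (Fin n) := univ \ {x, σ x} with hs
  have hscard : n - 2 ≤ s.card := by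
    rw [hs, card_sdiff_of_subset (subset_univ _), card_univ, Fintype.card_fin]
    have : ({x, σ x} : Finset (Fin n)).card ≤ 2 := card_insert_le _ _ |>.trans (by simp)
    omega
  obtain ⟨C, hCs, hCcard⟩ := Finset.exists_subset_card_eq (show r - 1 ≤ s.card by omega)
  have hxC : x ∉ C := by
    intro hc
    have := hCs hc
    rw [hs, mem_sdiff] at this
    exact this.2 (by simp)
  set B : Finset (Fin n) := insert x C with hBdef
  have hBcard : B.card = r := by
    rw [hBdef, card_insert_of_notMem hxC, hCcard]
    omega
  have hBmem : B ∈ Finset.powersetCard r univ := Finset.mem_powersetCard_univ.mpr hBcard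
  have hxB : x ∈ B := mem_insert_self _ _
  have hσxB : σ x ∈ B := (mem_iff_of_image_eq σ (h B hBmem) x).mp hxB
  rw [hBdef, mem_insert] at hσxB
  rcases hσxB with h1 | h1
  · exact hsx h1
  · have := hCs h1
    rw [hs, mem_sdiff] at this
    exact this.2 (by simp)

end Aux

open Finset in
/-- For `n ≥ 2r`, the base size of `S_n` acting on `r`-subsets of `[n]` is the least
positive integer `l` for which an `(l,n,r)`-hypergraph exists: a set `E` of `n`
distinct subsets of `[l]` (the empty subset allowed) such that every vertex lies in
at most `r` members of `E` and the vertex-neighbourhood map is injective. -/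
theorem baseSize_eq_least_hypergraph (n r : ℕ) (hn : 0 < n) (hr : 0 < r)
    (h2r : 2 * r ≤ n) :
    IsLeast {l : ℕ | 0 < l ∧ ∃ E : Finset (Finset (Fin l)), E.card = n ∧
        (∀ x : Fin l, (E.filter (fun e => x ∈ e)).card ≤ r) ∧
        Function.Injective (fun x : Fin l => E.filter (fun e => x ∈ e))}
      (baseSizeSym n r) := by
  have hn2 : 2 ≤ n := by omega
  have hrn : r + 1 ≤ n := by omega
  have hSne : {l : ℕ | ∃ 𝓑 : Finset (Finset (Fin n)), IsBaseSym n r 𝓑 ∧ 𝓑.card = l}.Nonempty := by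
    obtain ⟨𝓑, h𝓑⟩ := exists_base n r hr hrn
    exact ⟨𝓑.card, 𝓑, h𝓑, rfl⟩
  have hm : ∃ 𝓑 : Finset (Finset (Fin n)), IsBaseSym n r 𝓑 ∧ 𝓑.card = baseSizeSym n r :=
    Nat.sInf_mem hSne
  constructor
  · obtain ⟨𝓑, hb, hc⟩ := hm
    exact hypergraph_of_base hn2 𝓑 hb hc
  · rintro t ⟨ht0, E, hE, hdegle, -⟩
    set e : Fin n → Finset (Fin t) :=
      fun x => ((Finset.equivFinOfCardEq hE).symm x : Finset (Fin t)) with he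
    have hinj : Function.Injective e := fun a b h =>
      (Finset.equivFinOfCardEq hE).symm.injective (Subtype.ext h)
    have hEeq : univ.image e = E := by
      apply Finset.eq_of_subset_of_card_le
      · intro s hs
        obtain ⟨x, _, rfl⟩ := mem_image.mp hs
        exact ((Finset.equivFinOfCardEq hE).symm x).2
      · rw [hE, card_image_of_injective _ hinj, card_univ, Fintype.card_fin]
    have hdle : ∀ i, hdeg e i ≤ r := by
      intro i
      rw [← filter_card_eq_hdeg e hinj i, hEeq]
      exact hdegle i
    obtain ⟨e', hinj', hdeg'⟩ := pad h2r _ e rfl hinj hdle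
    obtain ⟨𝓑, hb, hc⟩ := base_of_edges e' hinj' hdeg'
    calc baseSizeSym n r ≤ 𝓑.card := Nat.sInf_le ⟨𝓑, hb, rfl⟩
    _ ≤ t := hc
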